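/- arXiv:math/9806114 — 7 statements merged into one kernel-verified Lean document; each statement's English description precedes it below -/
import Mathlib

section
/- Let I be a finite type with a distinguished element e and an involution j ↦ j∨ on I fixing e. Let S be a symmetric I-by-I matrix over ℂ, set dim j := S e j, and assume dim j ≠ 0 for all j and dim e = 1. Suppose the fusion coefficients N : I → I → I → ℂ satisfy the Verlinde formula S i k * S j k = dim k * ∑_p N i j p * S p k for all i, j, k, and that N i j e = 1 if j = i∨ and N i j e = 0 otherwise. If there exists a vector d̂ : I → ℂ with ∑_j d̂ j * S j i = (1 if i = e else 0) for all i, then S * Y * S = C, where Y is the diagonal matrix with diagonal entries Y j j = d̂ j / dim j and C is the conjugation matrix C i j = (1 if j = i∨ else 0). -/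
/-!
Up to the weight `dim k⁻¹`, the product `S i k * S j k` is the `k`-th column of `S` paired with
the fusion row `N i j`, by the Verlinde formula. Summing against `d̂` therefore gives
`(S Y S) i j = ∑ p, N i j p * (S d̂) p`, and `S d̂` is the unit vector at `e`, so only
`N i j e` survives, which is the conjugation matrix entry.
-/

open Matrix BigOperators

theorem sum_div_dim_mul_eq_sum_fusion_mulVec {K I : Type*} [Field K] [Fintype I]
    (e : I) (S : Matrix I I K) (hdim : ∀ j, S e j ≠ 0) (N : I → I → I → K)
    (hVer : ∀ i j k, S i k * S j k = S e k * ∑ p, N i j p * S p k) (w : I → K) (i j : I) :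
    ∑ k, w k / S e k * (S i k * S j k) = ∑ p, N i j p * (S *ᵥ w) p := by
  calc ∑ k, w k / S e k * (S i k * S j k)
      = ∑ k, ∑ p, w k * (N i j p * S p k) := by
        refine Finset.sum_congr rfl fun k _ => ?_
        rw [hVer, ← mul_assoc, div_mul_cancel₀ _ (hdim k), Finset.mul_sum]
    _ = ∑ p, N i j p * (S *ᵥ w) p := by
        rw [Finset.sum_comm]
        simp only [mulVec, dotProduct, Finset.mul_sum]
        exact Finset.sum_congr rfl fun p _ => Finset.sum_congr rfl fun k _ => by ring

theorem stmt_0_general {I : Type*} [Fintype I] [DecidableEq I]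
    (e : I) (v : I → I)
    (S : Matrix I I ℂ) (hS : S.IsSymm)
    (hdim : ∀ j, S e j ≠ 0)
    (N : I → I → I → ℂ)
    (hVer : ∀ i j k, S i k * S j k = S e k * ∑ p, N i j p * S p k)
    (hNe : ∀ i j, N i j e = if j = v i then 1 else 0)
    (dhat : I → ℂ)
    (hd : ∀ i, ∑ j, dhat j * S j i = if i = e then 1 else 0) :
    S * Matrix.diagonal (fun j => dhat j / S e j) * S
      = Matrix.of (fun i j => if j = v i then (1 : ℂ) else 0) := by
  have hunit : S *ᵥ dhat = Pi.single e 1 := by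
    rw [← vecMul_transpose, hS.eq]
    funext i
    simp only [vecMul, dotProduct, hd, Pi.single_apply]
  ext i j
  calc (S * diagonal (fun j => dhat j / S e j) * S) i j
      = ∑ k, dhat k / S e k * (S i k * S j k) := by
        rw [mul_apply]
        simp only [mul_diagonal, hS.apply j]
        exact Finset.sum_congr rfl fun k _ => by ring
    _ = ∑ p, N i j p * (S *ᵥ dhat) p :=
        sum_div_dim_mul_eq_sum_fusion_mulVec e S hdim N hVer dhat i j
    _ = N i j e := by simp [hunit, Pi.single_apply]
    _ = _ := hNe i j

/-- Equation (sysc): `S * Y * S = C`, where `Y = diag(d̂ j / dim j)` and `C` is the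
conjugation matrix of the involution `j ↦ j∨`. -/
theorem stmt_0 {I : Type*} [Fintype I] [DecidableEq I]
    (e : I) (v : I → I) (hv : Function.Involutive v) (hve : v e = e)
    (S : Matrix I I ℂ) (hS : S.IsSymm)
    (hdim : ∀ j, S e j ≠ 0) (hde : S e e = 1)
    (N : I → I → I → ℂ)
    (hVer : ∀ i j k, S i k * S j k = S e k * ∑ p, N i j p * S p k)
    (hNe : ∀ i j, N i j e = if j = v i then 1 else 0)
    (dhat : I → ℂ)
    (hd : ∀ i, ∑ j, dhat j * S j i = if i = e then 1 else 0) :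
    S * Matrix.diagonal (fun j => dhat j / S e j) * S
      = Matrix.of (fun i j => if j = v i then (1 : ℂ) else 0) :=
  stmt_0_general e v S hS hdim N hVer hNe dhat hd
end

section
/- Let I be a finite type with a distinguished element e and an involution j ↦ j∨ on I fixing e. Let S be a symmetric I-by-I matrix over ℂ, set dim j := S e j, and assume dim j ≠ 0 for all j and dim e = 1. Suppose the fusion coefficients N : I → I → I → ℂ satisfy the Verlinde formula S i k * S j k = dim k * ∑_p N i j p * S p k for all i, j, k, and that N i j e = 1 if j = i∨ and N i j e = 0 otherwise. If there exists a vector d̂ : I → ℂ with ∑_j d̂ j * S j i = (1 if i = e else 0) for all i, then the matrix S is invertible. -/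
open Matrix BigOperators

/-- Implication 1) ⇒ 3) of the modularity lemma: if `S d̂ = δ_e` has a solution,
then the S-matrix is invertible. -/
theorem stmt_1 {I : Type*} [Fintype I] [DecidableEq I]
    (e : I) (v : I → I) (hv : Function.Involutive v) (hve : v e = e)
    (S : Matrix I I ℂ) (hS : S.IsSymm)
    (hdim : ∀ j, S e j ≠ 0) (hde : S e e = 1)
    (N : I → I → I → ℂ)
    (hVer : ∀ i j k, S i k * S j k = S e k * ∑ p, N i j p * S p k)
    (hNe : ∀ i j, N i j e = if j = v i then 1 else 0)
    (hex : ∃ dhat : I → ℂ, ∀ i, ∑ j, dhat j * S j i = if i = e then 1 else 0) :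
    IsUnit S := by
  obtain ⟨dhat, hd⟩ := hex
  have hsym : ∀ a b, S a b = S b a := fun a b => congrFun (congrFun hS b) a
  set Y : Matrix I I ℂ := Matrix.diagonal (fun j => dhat j / S e j) with hY
  set C : Matrix I I ℂ := Matrix.of (fun i k => if k = v i then 1 else 0) with hC
  have key : S * Y * S = C := by
    ext i k
    have hentry : ∀ j, (S * Y) i j = S i j * (dhat j / S e j) := by
      intro j
      simp [hY, Matrix.mul_diagonal]
    rw [Matrix.mul_apply]
    simp only [hentry]
    have step : ∀ j, S i j * (dhat j / S e j) * S j k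
        = ∑ p, N i k p * (dhat j * S j p) := by
      intro j
      have h0 := hdim j
      have hv' : S i j * S j k = S e j * ∑ p, N i k p * S p j := by
        rw [hsym j k]; exact hVer i k j
      have hsum : ∑ p, N i k p * (dhat j * S j p) = dhat j * ∑ p, N i k p * S p j := by
        rw [Finset.mul_sum]
        exact Finset.sum_congr rfl (fun p _ => by rw [hsym j p]; ring)
      rw [hsum]
      have h1 : S i j * (dhat j / S e j) * S j k = (S i j * S j k) * dhat j / S e j := by
        ring
      rw [h1, hv']
      set T := ∑ p, N i k p * S p j with hT
      have h2 : (S e j * T) * dhat j = (dhat j * T) * S e j := by ring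
      rw [h2, mul_div_cancel_right₀ _ h0]
    simp only [step]
    rw [Finset.sum_comm]
    have hps : ∀ p, ∑ j, N i k p * (dhat j * S j p) = N i k p * (if p = e then 1 else 0) := by
      intro p
      rw [← Finset.mul_sum]
      congr 1
      exact hd p
    simp only [hps, mul_ite, mul_one, mul_zero]
    rw [Finset.sum_ite_eq' Finset.univ e (fun p => N i k p)]
    simp [hNe, hC]
  have hCC : C * C = 1 := by
    ext i k
    rw [Matrix.mul_apply]
    simp only [hC, Matrix.of_apply]
    rw [Finset.sum_eq_single (v i)]
    · simp [hv i, Matrix.one_apply, eq_comm]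
    · intro b _ hb; simp [hb]
    · simp
  have hCdet : IsUnit C.det :=
    IsUnit.of_mul_eq_one (C.det) (by rw [← Matrix.det_mul, hCC, Matrix.det_one])
  have h3 : S.det * (Y.det * S.det) = C.det := by
    rw [← mul_assoc, ← Matrix.det_mul, ← Matrix.det_mul, key]
  have : IsUnit S.det := isUnit_of_mul_isUnit_left (h3 ▸ hCdet)
  exact (Matrix.isUnit_iff_isUnit_det S).mpr this
end

section
/- Let I be a finite type with a distinguished element e and an involution j ↦ j∨ on I fixing e. Let S be a symmetric I-by-I matrix over ℂ, set dim j := S e j, and assume dim j ≠ 0 for all j and dim e = 1. Suppose the fusion coefficients N : I → I → I → ℂ satisfy the Verlinde formula S i k * S j k = dim k * ∑_p N i j p * S p k for all i, j, k, and that N i j e = 1 if j = i∨ and N i j e = 0 otherwise. If d̂ : I → ℂ satisfies ∑_j d̂ j * S j i = (1 if i = e else 0) for all i, then d̂ j ≠ 0 for every j ∈ I; in particular d̂ e ≠ 0. -/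
/-!
Put `Y = diag (d̂ k / dim k)`. Expanding `S Y S` entrywise, the Verlinde formula turns the
`(i, j)` entry into `∑ p, N i j p (S d̂) p`, which is `N i j e` because `S d̂ = δ_e`. Hence
`S Y S` is the permutation matrix of the involution `j ↦ j∨`, so it has determinant `±1`.
Then `det Y ≠ 0`, and every diagonal entry of `Y`, hence every `d̂ j`, is nonzero.
-/

open Matrix BigOperators

theorem Matrix.ne_zero_of_det_mul_diagonal_mul_ne_zero {R I : Type*} [CommRing R]
    [Fintype I] [DecidableEq I] {A B : Matrix I I R} {y : I → R}
    (h : (A * diagonal y * B).det ≠ 0) (k : I) : y k ≠ 0 := fun hk => h <| by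
  rw [det_mul, det_mul, det_diagonal, Finset.prod_eq_zero (Finset.mem_univ k) hk, mul_zero,
    zero_mul]

theorem Function.Involutive.permMatrix_toPerm_apply {R I : Type*} [Zero R] [One R]
    [DecidableEq I] {v : I → I} (hv : Function.Involutive v) (i j : I) :
    (hv.toPerm v).permMatrix R i j = if j = v i then 1 else 0 := by
  simp [Equiv.Perm.permMatrix, PEquiv.toMatrix_apply, eq_comm]

section Verlinde

variable {K I : Type*} [Field K] [Fintype I] [DecidableEq I]
  {S : Matrix I I K} {e : I} {N : I → I → I → K}

theorem verlinde_mul_diagonal_mul_apply (hS : S.IsSymm) (hdim : ∀ k, S e k ≠ 0)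
    (hVer : ∀ i j k, S i k * S j k = S e k * ∑ p, N i j p * S p k) (d : I → K) (i j : I) :
    (S * diagonal (fun k => d k / S e k) * S) i j = ∑ p, N i j p * ∑ k, d k * S k p := by
  have hterm : ∀ k, S i k * (d k / S e k) * S k j = d k * ∑ p, N i j p * S p k := by
    intro k
    calc S i k * (d k / S e k) * S k j = d k * (S i k * S j k) / S e k := by
          rw [hS.apply j k]; ring
      _ = d k * ∑ p, N i j p * S p k := by
          rw [hVer, mul_left_comm (d k), mul_div_cancel_left₀ _ (hdim k)]
  rw [mul_apply]
  simp only [mul_diagonal, hterm, Finset.mul_sum]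
  rw [Finset.sum_comm]
  refine Finset.sum_congr rfl fun p _ => Finset.sum_congr rfl fun k _ => ?_
  rw [hS.apply k p]
  ring

theorem verlinde_mul_diagonal_mul_eq (hS : S.IsSymm) (hdim : ∀ k, S e k ≠ 0)
    (hVer : ∀ i j k, S i k * S j k = S e k * ∑ p, N i j p * S p k) {d : I → K}
    (hd : ∀ p, ∑ k, d k * S k p = if p = e then 1 else 0) :
    S * diagonal (fun k => d k / S e k) * S = of fun i j => N i j e := by
  ext i j
  simp [verlinde_mul_diagonal_mul_apply hS hdim hVer, hd]

end Verlinde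

theorem stmt_2_general {I : Type*} [Fintype I] [DecidableEq I]
    (e : I) (v : I → I) (hv : Function.Involutive v)
    (S : Matrix I I ℂ) (hS : S.IsSymm)
    (hdim : ∀ j, S e j ≠ 0)
    (N : I → I → I → ℂ)
    (hVer : ∀ i j k, S i k * S j k = S e k * ∑ p, N i j p * S p k)
    (hNe : ∀ i j, N i j e = if j = v i then 1 else 0)
    (dhat : I → ℂ)
    (hd : ∀ i, ∑ j, dhat j * S j i = if i = e then 1 else 0) :
    (∀ j, dhat j ≠ 0) ∧ dhat e ≠ 0 := by
  have hSYS : S * diagonal (fun k => dhat k / S e k) * S = (hv.toPerm v).permMatrix ℂ := by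
    ext i j
    rw [verlinde_mul_diagonal_mul_eq hS hdim hVer hd, hv.permMatrix_toPerm_apply, of_apply, hNe]
  have hdet : (S * diagonal (fun k => dhat k / S e k) * S).det ≠ 0 := by
    rw [hSYS, det_permutation]
    exact (Units.map (Int.castRingHom ℂ).toMonoidHom (Equiv.Perm.sign _)).ne_zero
  have key : ∀ j, dhat j ≠ 0 := fun j =>
    left_ne_zero_of_mul (ne_zero_of_det_mul_diagonal_mul_ne_zero hdet j)
  exact ⟨key, key e⟩

/-- If `S d̂ = δ_e` then every entry of `d̂` is nonzero; in particular `d̂ e ≠ 0`. -/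
theorem stmt_2 {I : Type*} [Fintype I] [DecidableEq I]
    (e : I) (v : I → I) (hv : Function.Involutive v) (hve : v e = e)
    (S : Matrix I I ℂ) (hS : S.IsSymm)
    (hdim : ∀ j, S e j ≠ 0) (hde : S e e = 1)
    (N : I → I → I → ℂ)
    (hVer : ∀ i j k, S i k * S j k = S e k * ∑ p, N i j p * S p k)
    (hNe : ∀ i j, N i j e = if j = v i then 1 else 0)
    (dhat : I → ℂ)
    (hd : ∀ i, ∑ j, dhat j * S j i = if i = e then 1 else 0) :
    (∀ j, dhat j ≠ 0) ∧ dhat e ≠ 0 :=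
  stmt_2_general e v hv S hS hdim N hVer hNe dhat hd
end

section
/- Let I be a finite type with a distinguished element e and an involution j ↦ j∨ on I fixing e. Let S be a symmetric I-by-I matrix over ℂ, set dim j := S e j, and assume dim j ≠ 0 for all j, dim e = 1, and dim (j∨) = dim j for all j. Suppose the fusion coefficients N : I → I → I → ℂ satisfy the Verlinde formula S i k * S j k = dim k * ∑_p N i j p * S p k for all i, j, k, and that N i j e = 1 if j = i∨ and N i j e = 0 otherwise. If d̂ : I → ℂ satisfies ∑_j d̂ j * S j i = (1 if i = e else 0) for all i, then for every i ∈ I: ∑_j dim j * S j i = (1 / d̂ e) * (1 if i = e else 0). -/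
/-!
Put `Y := diag (d̂ k / dim k)`. By the Verlinde formula the `(a, b)` entry of `S Y S` is
`∑ p, N a b p * (d̂ ᵥ* S) p = N a b e`, so `S Y S` is the permutation matrix of `j ↦ j∨`.
Multiplying it on the left by `d̂`, and using `d̂ ᵥ* S = δ_e` twice, gives `d̂ ∘ ∨ = d̂ e • dim`;
as `dim` is self-dual, `d̂ = d̂ e • dim`, and substituting this into `d̂ ᵥ* S = δ_e` gives the claim.
-/

open Matrix

section

variable {K I : Type*} [Field K] [Fintype I] [DecidableEq I]

theorem mul_diagonal_mul_eq_of_verlinde (e : I) (S : Matrix I I K) (hS : S.IsSymm)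
    (hdim : ∀ j, S e j ≠ 0) (N : I → I → I → K)
    (hVer : ∀ i j k, S i k * S j k = S e k * ∑ p, N i j p * S p k)
    (dhat : I → K) (hd : dhat ᵥ* S = Pi.single e 1) :
    S * diagonal (fun k => dhat k / S e k) * S = of fun a b => N a b e := by
  have hd' : S *ᵥ dhat = Pi.single e 1 := by rw [← hS.eq, mulVec_transpose, hd]
  ext a b
  have hterm : ∀ k, S a k * (dhat k / S e k) * S k b = dhat k * ∑ p, N a b p * S p k := by
    intro k
    rw [hS.apply b k, mul_right_comm, hVer, mul_div_assoc', mul_div_right_comm,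
      mul_div_cancel_left₀ _ (hdim k), mul_comm]
  calc (S * diagonal (fun k => dhat k / S e k) * S) a b
      = ∑ k, dhat k * ∑ p, N a b p * S p k := by
        rw [mul_apply]
        simp only [mul_diagonal, hterm]
    _ = ∑ p, N a b p * (S *ᵥ dhat) p := by
        simp only [mulVec, dotProduct, Finset.mul_sum]
        rw [Finset.sum_comm]
        simp only [mul_left_comm, mul_comm]
    _ = N a b e := by simp [hd', Pi.single_apply]

theorem vecMul_mul_diagonal_mul_of_vecMul_eq_single (e : I) (S : Matrix I I K) (u w : I → K)
    (hu : u ᵥ* S = Pi.single e 1) :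
    u ᵥ* (S * diagonal w * S) = w e • S.row e := by
  rw [← vecMul_vecMul, ← vecMul_vecMul, hu, single_vecMul_diagonal, single_vecMul, one_mul]

theorem vecMul_of_involutive {v : I → I} (hv : Function.Involutive v) (u : I → K) :
    u ᵥ* (of fun a b => if b = v a then 1 else 0) = u ∘ v := by
  ext b
  simp_rw [vecMul, dotProduct, of_apply, mul_ite, mul_one, mul_zero, eq_comm (a := b), hv.eq_iff,
    Finset.sum_ite_eq', Finset.mem_univ, if_true, Function.comp_apply]

theorem eq_smul_row_of_verlinde (e : I) {v : I → I} (hv : Function.Involutive v)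
    (S : Matrix I I K) (hS : S.IsSymm) (hdim : ∀ j, S e j ≠ 0) (hde : S e e = 1)
    (hdual : ∀ j, S e (v j) = S e j) (N : I → I → I → K)
    (hVer : ∀ i j k, S i k * S j k = S e k * ∑ p, N i j p * S p k)
    (hNe : ∀ i j, N i j e = if j = v i then 1 else 0)
    (dhat : I → K) (hd : dhat ᵥ* S = Pi.single e 1) :
    dhat = dhat e • S.row e := by
  have hSYS : S * diagonal (fun k => dhat k / S e k) * S =
      of fun a b => if b = v a then 1 else 0 := by
    rw [mul_diagonal_mul_eq_of_verlinde e S hS hdim N hVer dhat hd]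
    simp only [hNe]
  have hrow := vecMul_mul_diagonal_mul_of_vecMul_eq_single e S dhat (fun k => dhat k / S e k) hd
  rw [hSYS, vecMul_of_involutive hv, hde, div_one] at hrow
  ext j
  simpa [hv j, hdual] using congrFun hrow (v j)

end

theorem stmt_5_general {I : Type*} [Fintype I] [DecidableEq I]
    (e : I) (v : I → I) (hv : Function.Involutive v)
    (S : Matrix I I ℂ) (hS : S.IsSymm)
    (hdim : ∀ j, S e j ≠ 0) (hde : S e e = 1)
    (hdual : ∀ j, S e (v j) = S e j)
    (N : I → I → I → ℂ)
    (hVer : ∀ i j k, S i k * S j k = S e k * ∑ p, N i j p * S p k)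
    (hNe : ∀ i j, N i j e = if j = v i then 1 else 0)
    (dhat : I → ℂ)
    (hd : ∀ i, ∑ j, dhat j * S j i = if i = e then 1 else 0) :
    ∀ i, ∑ j, S e j * S j i = (1 / dhat e) * (if i = e then 1 else 0) := by
  have hd' : dhat ᵥ* S = Pi.single e 1 :=
    funext fun i => (hd i).trans (Pi.single_apply e 1 i).symm
  have hscaled : dhat e • (S.row e ᵥ* S) = Pi.single e 1 := by
    rw [← smul_vecMul, ← eq_smul_row_of_verlinde e hv S hS hdim hde hdual N hVer hNe dhat hd', hd']
  have hdhat : dhat e ≠ 0 := by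
    rintro h
    simpa [h] using congrFun hscaled e
  intro i
  have hi := congrFun hscaled i
  rw [Pi.smul_apply, smul_eq_mul, Pi.single_apply] at hi
  rw [← hi, one_div, inv_mul_cancel_left₀ hdhat]
  rfl

/-- Implication 3) ⇒ 2): `∑_j dim(j) S_{j,i} = d̂(e)⁻¹ δ_{i,e}`. -/
theorem stmt_5 {I : Type*} [Fintype I] [DecidableEq I]
    (e : I) (v : I → I) (hv : Function.Involutive v) (hve : v e = e)
    (S : Matrix I I ℂ) (hS : S.IsSymm)
    (hdim : ∀ j, S e j ≠ 0) (hde : S e e = 1)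
    (hdual : ∀ j, S e (v j) = S e j)
    (N : I → I → I → ℂ)
    (hVer : ∀ i j k, S i k * S j k = S e k * ∑ p, N i j p * S p k)
    (hNe : ∀ i j, N i j e = if j = v i then 1 else 0)
    (dhat : I → ℂ)
    (hd : ∀ i, ∑ j, dhat j * S j i = if i = e then 1 else 0) :
    ∀ i, ∑ j, S e j * S j i = (1 / dhat e) * (if i = e then 1 else 0) :=
  stmt_5_general e v hv S hS hdim hde hdual N hVer hNe dhat hd
end

section
/- Let I be a finite type with a distinguished element e and an involution j ↦ j∨ on I fixing e. Let S be a symmetric I-by-I matrix over ℂ, set dim j := S e j, and assume dim j ≠ 0 for all j, dim e = 1, and dim (j∨) = dim j for all j. Suppose the fusion coefficients N : I → I → I → ℂ satisfy the Verlinde formula S i k * S j k = dim k * ∑_p N i j p * S p k for all i, j, k, and that N i j e = 1 if j = i∨ and N i j e = 0 otherwise. If d̂ : I → ℂ satisfies ∑_j d̂ j * S j i = (1 if i = e else 0) for all i, then dim j = d̂ j / d̂ e for every j ∈ I. -/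
open Matrix BigOperators

/-!
Verlinde's formula together with `d̂ S = δ_e` gives `S · diag(d̂ / dim) · Sᵀ = (N i j e)ᵢⱼ`, the
permutation matrix of duality. Applying it to `d̂` yields `d̂(i∨)` on one side and `d̂(e) · S i e` on
the other, so `d̂(j) = d̂(e) dim(j)`; and `d̂(e) ≠ 0` since `d̂ S ≠ 0`.
-/

namespace Matrix

variable {I R : Type*} [Fintype I] [DecidableEq I]

theorem mul_diagonal_mul_transpose_mulVec_of_vecMul_eq_single [CommSemiring R]
    {A : Matrix I I R} {x : I → R} {e : I} (hx : x ᵥ* A = Pi.single e 1) (w : I → R) :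
    (A * diagonal w * Aᵀ) *ᵥ x = w e • A.col e := by
  rw [← mulVec_mulVec, mulVec_transpose, hx, ← mulVec_mulVec, diagonal_mulVec_single, mul_one,
    mulVec_single, op_smul_eq_smul]

theorem mul_diagonal_div_mul_transpose_apply_of_verlinde {S : Matrix I I ℂ} (hS : S.IsSymm)
    {e : I} (hdim : ∀ k, S e k ≠ 0) {N : I → I → I → ℂ}
    (hVer : ∀ i j k, S i k * S j k = S e k * ∑ p, N i j p * S p k)
    {dhat : I → ℂ} (hd : dhat ᵥ* S = Pi.single e 1) (i j : I) :
    (S * diagonal (fun k => dhat k / S e k) * Sᵀ) i j = N i j e := by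
  have hd' : S *ᵥ dhat = Pi.single e 1 := by rw [← hd, ← mulVec_transpose, hS]
  calc (S * diagonal (fun k => dhat k / S e k) * Sᵀ) i j
      = ∑ k, dhat k / S e k * (S i k * S j k) := by
        rw [mul_apply]
        simp only [mul_diagonal, transpose_apply]
        exact Finset.sum_congr rfl fun k _ => by ring
    _ = ∑ k, ∑ p, N i j p * (S p k * dhat k) := by
        refine Finset.sum_congr rfl fun k _ => ?_
        rw [hVer, ← mul_assoc, div_mul_cancel₀ _ (hdim k), Finset.mul_sum]
        exact Finset.sum_congr rfl fun p _ => by ring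
    _ = ∑ p, N i j p * (S *ᵥ dhat) p := by
        rw [Finset.sum_comm]
        simp only [mulVec, dotProduct, Finset.mul_sum]
    _ = N i j e := by simp [hd', Pi.single_apply]

end Matrix

theorem stmt_7_general {I : Type*} [Fintype I] [DecidableEq I]
    (e : I) (v : I → I) (hv : Function.Involutive v)
    (S : Matrix I I ℂ) (hS : S.IsSymm)
    (hdim : ∀ j, S e j ≠ 0) (hde : S e e = 1)
    (hdual : ∀ j, S e (v j) = S e j)
    (N : I → I → I → ℂ)
    (hVer : ∀ i j k, S i k * S j k = S e k * ∑ p, N i j p * S p k)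
    (hNe : ∀ i j, N i j e = if j = v i then 1 else 0)
    (dhat : I → ℂ)
    (hd : ∀ i, ∑ j, dhat j * S j i = if i = e then 1 else 0) :
    ∀ j, S e j = dhat j / dhat e := by
  have hd' : dhat ᵥ* S = Pi.single e 1 := funext fun i => by rw [Pi.single_apply]; exact hd i
  have hdhat_dual : ∀ i, dhat (v i) = dhat e * S e i := fun i => by
    have h := congrFun
      (mul_diagonal_mul_transpose_mulVec_of_vecMul_eq_single hd' fun k => dhat k / S e k) i
    simp only [mulVec, dotProduct, mul_diagonal_div_mul_transpose_apply_of_verlinde hS hdim hVer hd',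
      hNe] at h
    simpa [hde, hS.apply i e] using h
  have hdhat : ∀ j, dhat j = dhat e * S e j := fun j => by
    simpa only [hv j, hdual j] using hdhat_dual (v j)
  have hdhat_e : dhat e ≠ 0 := fun h0 => by
    have hzero : ∀ j, dhat j = 0 := fun j => by rw [hdhat j, h0, zero_mul]
    simpa [hzero] using hd e
  intro j
  rw [hdhat j, mul_div_cancel_left₀ _ hdhat_e]

/-- Equation (eq-d=d): `dim(j) = d̂(j)/d̂(e)` for every `j`. -/
theorem stmt_7 {I : Type*} [Fintype I] [DecidableEq I]
    (e : I) (v : I → I) (hv : Function.Involutive v) (hve : v e = e)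
    (S : Matrix I I ℂ) (hS : S.IsSymm)
    (hdim : ∀ j, S e j ≠ 0) (hde : S e e = 1)
    (hdual : ∀ j, S e (v j) = S e j)
    (N : I → I → I → ℂ)
    (hVer : ∀ i j k, S i k * S j k = S e k * ∑ p, N i j p * S p k)
    (hNe : ∀ i j, N i j e = if j = v i then 1 else 0)
    (dhat : I → ℂ)
    (hd : ∀ i, ∑ j, dhat j * S j i = if i = e then 1 else 0) :
    ∀ j, S e j = dhat j / dhat e :=
  stmt_7_general e v hv S hS hdim hde hdual N hVer hNe dhat hd
end

section
/- Let I be a finite type with a distinguished element e and an involution j ↦ j∨ on I fixing e. Let S be a symmetric I-by-I matrix over ℂ, set dim j := S e j, and assume dim j ≠ 0 for all j and dim e = 1. Suppose the fusion coefficients N : I → I → I → ℂ satisfy the Verlinde formula S i k * S j k = dim k * ∑_p N i j p * S p k for all i, j, k, and that N i j e = 1 if j = i∨ and N i j e = 0 otherwise. Then the following are equivalent: (1) there exists a vector d̂ : I → ℂ with ∑_j d̂ j * S j i = (1 if i = e else 0) for all i; (2) S is invertible. -/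
open Matrix BigOperators

/-- Equivalence 1) ⟺ 3) of the modularity lemma: `1 ∈ im(S)` iff `S` is invertible. -/
theorem stmt_8 {I : Type*} [Fintype I] [DecidableEq I]
    (e : I) (v : I → I) (hv : Function.Involutive v) (hve : v e = e)
    (S : Matrix I I ℂ) (hS : S.IsSymm)
    (hdim : ∀ j, S e j ≠ 0) (hde : S e e = 1)
    (N : I → I → I → ℂ)
    (hVer : ∀ i j k, S i k * S j k = S e k * ∑ p, N i j p * S p k)
    (hNe : ∀ i j, N i j e = if j = v i then 1 else 0) :
    (∃ dhat : I → ℂ, ∀ i, ∑ j, dhat j * S j i = if i = e then 1 else 0) ↔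
      IsUnit S := by
  constructor
  · rintro ⟨d, hd⟩
    set Y : Matrix I I ℂ := Matrix.diagonal fun j => d j / S e j with hY
    set C : Matrix I I ℂ := fun i k => if k = v i then (1 : ℂ) else 0 with hC
    have hsym : ∀ i j, S i j = S j i := fun i j => (hS.apply j i)
    have hSYS : S * Y * S = C := by
      ext i k
      have h1 : (S * Y * S) i k = ∑ j, S i j * (d j / S e j) * S j k := by
        rw [Matrix.mul_apply]
        exact Finset.sum_congr rfl fun x _ => by rw [hY, Matrix.mul_diagonal]
      rw [h1]
      have h2 : ∀ j, S i j * (d j / S e j) * S j k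
          = ∑ p, N i k p * (d j * S j p) := by
        intro j
        have : S i j * (d j / S e j) * S j k = (d j / S e j) * (S i j * S k j) := by
          rw [hsym j k]; ring
        rw [this, hVer i k j, ← mul_assoc, div_mul_cancel₀ _ (hdim j),
          Finset.mul_sum]
        refine Finset.sum_congr rfl fun p _ => ?_
        rw [hsym p j]; ring
      simp_rw [h2]
      rw [Finset.sum_comm]
      have h3 : ∀ p, ∑ j, N i k p * (d j * S j p) = N i k p * (if p = e then 1 else 0) := by
        intro p
        rw [← Finset.mul_sum, hd p]
      simp_rw [h3]
      simp [hNe i k, hC]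
    have hCC : C * C = 1 := by
      ext i k
      rw [Matrix.mul_apply]; simp only [hC]
      rw [Finset.sum_eq_single (v i)]
      · simp [hv i, Matrix.one_apply, eq_comm]
      · intro b _ hb; simp [hb]
      · intro h; simp at h
    have hdet : S.det * Y.det * S.det = C.det := by
      rw [← Matrix.det_mul, ← Matrix.det_mul, hSYS]
    have hCdet : C.det ≠ 0 := by
      have h := congrArg Matrix.det hCC
      rw [Matrix.det_mul, Matrix.det_one] at h
      intro h0; rw [h0, mul_zero] at h; exact zero_ne_one h
    rw [Matrix.isUnit_iff_isUnit_det, isUnit_iff_ne_zero]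
    intro h
    rw [h] at hdet
    simp at hdet
    exact hCdet hdet.symm
  · rintro hS'
    obtain ⟨u, hu⟩ := hS'
    refine ⟨fun j => (↑u⁻¹ : Matrix I I ℂ) e j, fun i => ?_⟩
    have h : ((↑u⁻¹ : Matrix I I ℂ) * S) e i = (1 : Matrix I I ℂ) e i := by
      rw [← hu, Units.inv_mul]
    simpa [Matrix.mul_apply, Matrix.one_apply, eq_comm] using h
end

section
/- Let I be a finite type with a distinguished element e and an involution j ↦ j∨ on I fixing e. Let S be a symmetric I-by-I matrix over ℂ, set dim j := S e j, and assume dim j ≠ 0 for all j, dim e = 1, and dim (j∨) = dim j for all j. Suppose the fusion coefficients N : I → I → I → ℂ satisfy the Verlinde formula S i k * S j k = dim k * ∑_p N i j p * S p k for all i, j, k, and that N i j e = 1 if j = i∨ and N i j e = 0 otherwise. Then the following are equivalent: (1) there exists a vector d̂ : I → ℂ with ∑_j d̂ j * S j i = (1 if i = e else 0) for all i; (2) ∑_k (dim k)² ≠ 0 and for every i, ∑_j dim j * S j i = (∑_k (dim k)²) * (1 if i = e else 0); (3) S is invertible. -/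
open Matrix BigOperators

/-!
If `d̂ S = δ_e`, symmetry of `S` and the Verlinde formula give `S · diag(d̂ / dim) · S = (N_{ik,e})`,
the permutation matrix of `j ↦ j∨`, so `S` is invertible. Multiplying this identity on the left by
`d̂` gives `d̂ (j∨) = d̂ e · dim j`, so `d̂` is a multiple of `dim = S e`; evaluating `d̂ S = δ_e` at
`e` then yields `∑ dim² ≠ 0` and 2). Conversely, row `e` of `S⁻¹` solves `d̂ S = δ_e`, and 2)
gives the solution `dim / ∑ dim²`.
-/

theorem Matrix.isUnit_permMatrix {n R : Type*} [Fintype n] [DecidableEq n] [CommRing R]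
    (σ : Equiv.Perm n) : IsUnit (σ.permMatrix R) := by
  rw [isUnit_iff_isUnit_det, det_permutation]
  exact (Units.isUnit _).map (Int.castRingHom R)

theorem Matrix.isUnit_of_isUnit_mul_mul_self {n R : Type*} [Fintype n] [DecidableEq n] [CommRing R]
    {A B : Matrix n n R} (h : IsUnit (A * B * A)) : IsUnit A := by
  rw [isUnit_iff_isUnit_det, det_mul, det_mul] at h
  exact (isUnit_iff_isUnit_det A).2 (isUnit_of_mul_isUnit_right h)

theorem Matrix.inv_row_vecMul {n R : Type*} [Fintype n] [DecidableEq n] [CommRing R]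
    {A : Matrix n n R} (hA : IsUnit A) (i : n) : A⁻¹ i ᵥ* A = Pi.single i 1 := by
  calc A⁻¹ i ᵥ* A = Pi.single i 1 ᵥ* A⁻¹ ᵥ* A := by rw [single_one_vecMul]; rfl
    _ = Pi.single i 1 := by
      rw [vecMul_vecMul, nonsing_inv_mul A ((isUnit_iff_isUnit_det A).1 hA), vecMul_one]

section Fusion

variable {K I : Type*} [Field K] [DecidableEq I] {e : I} {N : I → I → I → K}

theorem fusion_unit_eq_permMatrix {v : I → I} (hv : Function.Involutive v)
    (hNe : ∀ i j, N i j e = if j = v i then 1 else 0) :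
    (of fun i k => N i k e : Matrix I I K) = (hv.toPerm v).permMatrix K := by
  ext i k
  simp [PEquiv.toMatrix_apply, hNe, eq_comm]

variable [Fintype I] {S : Matrix I I K}

theorem mul_diagonal_mul_eq_fusion_unit (hS : S.IsSymm) (hdim : ∀ j, S e j ≠ 0)
    (hVer : ∀ i j k, S i k * S j k = S e k * ∑ p, N i j p * S p k)
    {dhat : I → K} (hdhat : dhat ᵥ* S = Pi.single e 1) :
    S * diagonal (fun j => dhat j / S e j) * S = of fun i k => N i k e := by
  ext i k
  have hterm : ∀ j, S i j * (dhat j / S e j) * S j k = ∑ p, N i k p * (dhat j * S j p) := by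
    intro j
    calc S i j * (dhat j / S e j) * S j k = dhat j / S e j * (S i j * S k j) := by
          rw [hS.apply k j]; ring
      _ = dhat j * ∑ p, N i k p * S p j := by
          rw [hVer, ← mul_assoc, div_mul_cancel₀ _ (hdim j)]
      _ = ∑ p, N i k p * (dhat j * S j p) := by
          simp only [Finset.mul_sum, hS.apply j]; ring_nf
  calc (S * diagonal (fun j => dhat j / S e j) * S) i k
      = ∑ p, N i k p * ∑ j, dhat j * S j p := by
        rw [mul_apply]
        simp only [mul_diagonal, hterm, Finset.mul_sum]
        exact Finset.sum_comm
    _ = N i k ⬝ᵥ (dhat ᵥ* S) := rfl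
    _ = N i k e := by rw [hdhat, dotProduct_single, mul_one]

theorem eq_smul_of_vecMul_eq_single (hS : S.IsSymm) (hdim : ∀ j, S e j ≠ 0) (hde : S e e = 1)
    {v : I → I} (hv : Function.Involutive v) (hdual : ∀ j, S e (v j) = S e j)
    (hVer : ∀ i j k, S i k * S j k = S e k * ∑ p, N i j p * S p k)
    (hNe : ∀ i j, N i j e = if j = v i then 1 else 0)
    {dhat : I → K} (hdhat : dhat ᵥ* S = Pi.single e 1) :
    dhat = dhat e • S e := by
  have hSYS := (mul_diagonal_mul_eq_fusion_unit hS hdim hVer hdhat).trans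
    (fusion_unit_eq_permMatrix hv hNe)
  have hrow : dhat ᵥ* (S * diagonal (fun j => dhat j / S e j) * S) = dhat e • S e := by
    rw [← vecMul_vecMul, ← vecMul_vecMul, hdhat, single_vecMul_diagonal, one_mul, hde, div_one,
      single_vecMul]
    rfl
  rw [hSYS, vecMul_permMatrix] at hrow
  funext j
  simpa [hv j, hdual] using congrFun hrow (v j)

theorem dotProduct_row_ne_zero_and_row_vecMul_eq (hS : S.IsSymm) {c : K}
    (h : (c • S e) ᵥ* S = Pi.single e 1) :
    S e ⬝ᵥ S e ≠ 0 ∧ S e ᵥ* S = (S e ⬝ᵥ S e) • Pi.single e 1 := by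
  rw [smul_vecMul] at h
  have hc : c * (S e ⬝ᵥ S e) = 1 := by
    have hcol : S.col e = S e := funext (hS.apply e)
    simpa [vecMul_apply, hcol] using congrFun h e
  refine ⟨right_ne_zero_of_mul_eq_one hc, ?_⟩
  rw [← h, smul_smul, mul_comm, hc, one_smul]

end Fusion

theorem stmt_9_general {I : Type*} [Fintype I] [DecidableEq I]
    (e : I) (v : I → I) (hv : Function.Involutive v)
    (S : Matrix I I ℂ) (hS : S.IsSymm)
    (hdim : ∀ j, S e j ≠ 0) (hde : S e e = 1)
    (hdual : ∀ j, S e (v j) = S e j)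
    (N : I → I → I → ℂ)
    (hVer : ∀ i j k, S i k * S j k = S e k * ∑ p, N i j p * S p k)
    (hNe : ∀ i j, N i j e = if j = v i then 1 else 0) :
    [ (∃ dhat : I → ℂ, ∀ i, ∑ j, dhat j * S j i = if i = e then 1 else 0),
      ((∑ k, (S e k) ^ 2) ≠ 0 ∧
        ∀ i, ∑ j, S e j * S j i = (∑ k, (S e k) ^ 2) * (if i = e then 1 else 0)),
      IsUnit S ].TFAE := by
  have hvecMul : ∀ (w : I → ℂ) (c : ℂ),
      (∀ i, ∑ j, w j * S j i = c * if i = e then 1 else 0) ↔ w ᵥ* S = c • Pi.single e 1 := by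
    intro w c
    simp only [funext_iff, Pi.smul_apply, Pi.single_apply, smul_eq_mul]
    rfl
  have hsq : ∑ k, S e k ^ 2 = S e ⬝ᵥ S e := by simp only [dotProduct, sq]
  have hvecMul_one : ∀ w : I → ℂ,
      (∀ i, ∑ j, w j * S j i = if i = e then 1 else 0) ↔ w ᵥ* S = Pi.single e 1 := by
    simpa using (hvecMul · 1)
  simp only [hvecMul_one, hvecMul, hsq]
  tfae_have 1 → 2
  | ⟨dhat, hdhat⟩ => by
    rw [eq_smul_of_vecMul_eq_single hS hdim hde hv hdual hVer hNe hdhat] at hdhat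
    exact dotProduct_row_ne_zero_and_row_vecMul_eq hS hdhat
  tfae_have 2 → 1
  | ⟨hD, hrow⟩ => ⟨(S e ⬝ᵥ S e)⁻¹ • S e, by
    rw [smul_vecMul, hrow, smul_smul, inv_mul_cancel₀ hD, one_smul]⟩
  tfae_have 1 → 3
  | ⟨dhat, hdhat⟩ => by
    refine isUnit_of_isUnit_mul_mul_self (B := diagonal fun j => dhat j / S e j) ?_
    rw [mul_diagonal_mul_eq_fusion_unit hS hdim hVer hdhat, fusion_unit_eq_permMatrix hv hNe]
    exact isUnit_permMatrix _
  tfae_have 3 → 1 := fun hunit => ⟨S⁻¹ e, inv_row_vecMul hunit e⟩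
  tfae_finish

/-- The modularity lemma (Lemma lm-mod-eq): the conditions
1) `1 ∈ im(S)`, 2) `∑_j dim(j) S_{j,i} = D² δ_{i,e}` with `D² = ∑_j dim(j)² ≠ 0`,
and 3) invertibility of `S`, are all equivalent. -/
theorem stmt_9 {I : Type*} [Fintype I] [DecidableEq I]
    (e : I) (v : I → I) (hv : Function.Involutive v) (hve : v e = e)
    (S : Matrix I I ℂ) (hS : S.IsSymm)
    (hdim : ∀ j, S e j ≠ 0) (hde : S e e = 1)
    (hdual : ∀ j, S e (v j) = S e j)
    (N : I → I → I → ℂ)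
    (hVer : ∀ i j k, S i k * S j k = S e k * ∑ p, N i j p * S p k)
    (hNe : ∀ i j, N i j e = if j = v i then 1 else 0) :
    [ (∃ dhat : I → ℂ, ∀ i, ∑ j, dhat j * S j i = if i = e then 1 else 0),
      ((∑ k, (S e k) ^ 2) ≠ 0 ∧
        ∀ i, ∑ j, S e j * S j i = (∑ k, (S e k) ^ 2) * (if i = e then 1 else 0)),
      IsUnit S ].TFAE :=
  stmt_9_general e v hv S hS hdim hde hdual N hVer hNe
end
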